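/- Let (X, δ) be a diversity. Then (T_X, δ_T) is a diversity; that is, δ_T(F) ≥ 0 for all finite F ⊆ T_X with δ_T(F) = 0 if and only if |F| ≤ 1, and δ_T(F ∪ H) ≤ δ_T(F ∪ G) + δ_T(G ∪ H) for all finite F, G, H ⊆ T_X with G ≠ ∅. -/

import Mathlib

open scoped Classical

noncomputable section

/-- A diversity: axioms (D1) and (D2). -/
def IsDiversity {X : Type*} (δ : Finset X → ℝ) : Prop :=
  (∀ A, 0 ≤ δ A) ∧ (∀ A, δ A = 0 ↔ A.card ≤ 1) ∧
    ∀ A B C : Finset X, B ≠ ∅ → δ (A ∪ C) ≤ δ (A ∪ B) + δ (B ∪ C)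

/-- Membership in `P_X`: `f ∅ = 0` and `Σ_{A ∈ 𝓐} f A ≥ δ (⋃ 𝓐)` for every finite
collection `𝓐` of finite subsets of `X`. -/
def MemP {X : Type*} (δ : Finset X → ℝ) (f : Finset X → ℝ) : Prop :=
  f ∅ = 0 ∧ ∀ 𝓐 : Finset (Finset X), δ (𝓐.sup id) ≤ ∑ A ∈ 𝓐, f A

/-- Membership in the tight span `T_X`: the pointwise-minimal elements of `P_X`. -/
def MemT {X : Type*} (δ : Finset X → ℝ) (f : Finset X → ℝ) : Prop :=
  MemP δ f ∧ ∀ g : Finset X → ℝ, MemP δ g → (∀ A, g A ≤ f A) → g = f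

/-- The function `δ_T` on finite subsets of the tight span: `δ_T ∅ = 0` and for nonempty `F`,
`δ_T F = sup { δ(⋃𝓐) - Σ_{A ∈ 𝓐} inf_{f ∈ F} f A : 𝓐 a finite collection of finite subsets }`. -/
noncomputable def deltaT {X : Type*} (δ : Finset X → ℝ) (F : Finset (Finset X → ℝ)) : ℝ :=
  if F = ∅ then 0
  else sSup {r : ℝ | ∃ 𝓐 : Finset (Finset X),
    r = δ (𝓐.sup id) - ∑ A ∈ 𝓐, sInf ((fun f => f A) '' (F : Set (Finset X → ℝ)))}

/-!
A point `g` of the tight span is pinned down by minimality: `g A ≤ c` as soon as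
`δ (A ∪ ⋃ 𝓑) ≤ c + Σ_{B ∈ 𝓑} g B` for every `𝓑`, since otherwise lowering `g` at `A` to `c`
would stay in `P_X`. For `g ∈ E` this yields `g (⋃ 𝓐) ≤ Σ_{A ∈ 𝓐} inf_E A + δ_T(E)`.
For the triangle inequality, split `𝓐` according to whether `inf_{F ∪ H}` is attained on `F`
or on `H`, and bound `δ (⋃ 𝓐₁ ∪ ⋃ 𝓐₂) ≤ g (⋃ 𝓐₁) + g (⋃ 𝓐₂)` through any `g ∈ G`.
Two distinct points `f, g` of the tight span are at positive diversity because `f ⊓ g`,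
lying below both minimal elements, cannot belong to `P_X`.
-/

section

variable {X : Type*} {δ : Finset X → ℝ}

namespace IsDiversity

theorem apply_empty (hδ : IsDiversity δ) : δ ∅ = 0 :=
  (hδ.2.1 ∅).2 (by simp)

theorem apply_singleton (hδ : IsDiversity δ) (x : X) : δ {x} = 0 :=
  (hδ.2.1 {x}).2 (by simp)

theorem le_insert (hδ : IsDiversity δ) (A : Finset X) (x : X) : δ A ≤ δ (insert x A) := by
  simpa [hδ.apply_singleton] using hδ.2.2 A {x} ∅ (by simp)

theorem mono (hδ : IsDiversity δ) {A B : Finset X} (h : A ⊆ B) : δ A ≤ δ B := by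
  have key : ∀ C : Finset X, δ A ≤ δ (A ∪ C) := by
    intro C
    induction C using Finset.induction_on with
    | empty => simp
    | insert x C _ ih => exact ih.trans (by simpa using hδ.le_insert (A ∪ C) x)
  simpa [Finset.union_eq_right.2 h] using key B

theorem apply_sup_union_le {ι : Type*} (hδ : IsDiversity δ) {B : Finset X} (hB : B ≠ ∅)
    (s : Finset ι) (C : ι → Finset X) :
    δ (s.sup C ∪ B) ≤ ∑ i ∈ s, δ (C i ∪ B) + δ B := by
  induction s using Finset.induction_on with
  | empty => simp
  | insert a s ha ih =>
    have h := hδ.2.2 (C a) B (s.sup C ∪ B) hB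
    rw [Finset.union_left_comm B (s.sup C) B, Finset.union_self] at h
    rw [Finset.sup_insert, Finset.sum_insert ha, Finset.sup_eq_union, Finset.union_assoc]
    linarith

end IsDiversity

namespace MemP

variable {f : Finset X → ℝ}

theorem delta_le (hf : MemP δ f) (A : Finset X) : δ A ≤ f A := by
  simpa using hf.2 {A}

theorem nonneg (hδ : IsDiversity δ) (hf : MemP δ f) (A : Finset X) : 0 ≤ f A :=
  (hδ.1 A).trans (hf.delta_le A)

theorem delta_union_sup_le (hδ : IsDiversity δ) (hf : MemP δ f) (A : Finset X)
    (𝓑 : Finset (Finset X)) : δ (A ∪ 𝓑.sup id) ≤ f A + ∑ B ∈ 𝓑, f B := by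
  have h := hf.2 (insert A 𝓑)
  rw [Finset.sup_insert, id, Finset.sup_eq_union] at h
  by_cases hA : A ∈ 𝓑
  · rw [Finset.insert_eq_self.2 hA] at h
    linarith [hf.nonneg hδ A]
  · rwa [Finset.sum_insert hA] at h

theorem delta_union_le (hδ : IsDiversity δ) (hf : MemP δ f) (A B : Finset X) :
    δ (A ∪ B) ≤ f A + f B := by
  simpa using hf.delta_union_sup_le hδ A {B}

theorem update (hf : MemP δ f) {A : Finset X} (hA : A ≠ ∅) {c : ℝ}
    (hc : ∀ 𝓑 : Finset (Finset X), δ (A ∪ 𝓑.sup id) ≤ c + ∑ B ∈ 𝓑, f B) :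
    MemP δ (Function.update f A c) := by
  refine ⟨by rw [Function.update_of_ne hA.symm, hf.1], fun 𝓒 => ?_⟩
  by_cases hA𝓒 : A ∈ 𝓒
  · rw [Finset.sum_update_of_mem hA𝓒, Finset.sdiff_singleton_eq_erase]
    conv_lhs => rw [← Finset.insert_erase hA𝓒, Finset.sup_insert]
    exact hc _
  · rw [Finset.sum_update_of_notMem hA𝓒]
    exact hf.2 𝓒

end MemP

namespace MemT

variable {f g : Finset X → ℝ}

theorem le_of_forall_delta_le (hδ : IsDiversity δ) (hg : MemT δ g) {A : Finset X} {c : ℝ}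
    (hc : ∀ 𝓑 : Finset (Finset X), δ (A ∪ 𝓑.sup id) ≤ c + ∑ B ∈ 𝓑, g B) : g A ≤ c := by
  by_contra! hlt
  have hA : A ≠ ∅ := by
    rintro rfl
    have h0 : δ ∅ ≤ c := by simpa using hc ∅
    linarith [hδ.1 ∅, hg.1.1]
  have hle : Function.update g A c ≤ g := update_le_self_iff.2 hlt.le
  have := congrFun (hg.2 _ (hg.1.update hA hc) hle) A
  rw [Function.update_self] at this
  exact hlt.ne this

theorem not_memP_inf (hf : MemT δ f) (hg : MemT δ g) (hfg : f ≠ g) : ¬ MemP δ (f ⊓ g) :=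
  fun h => hfg ((hf.2 _ h fun _ => inf_le_left).symm.trans (hg.2 _ h fun _ => inf_le_right))

end MemT

/-- `inf_{f ∈ F} f A` as it occurs in `deltaT`; its junk value for `F = ∅` is `0`. -/
def infAt (F : Finset (Finset X → ℝ)) (A : Finset X) : ℝ :=
  sInf ((fun f => f A) '' (F : Set (Finset X → ℝ)))

section infAt

variable {F : Finset (Finset X → ℝ)}

theorem infAt_le {f : Finset X → ℝ} (hf : f ∈ F) (A : Finset X) : infAt F A ≤ f A :=
  csInf_le ((F.finite_toSet.image _).bddBelow) ⟨f, hf, rfl⟩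

theorem exists_eq_infAt (hF : F.Nonempty) (A : Finset X) : ∃ f ∈ F, f A = infAt F A := by
  obtain ⟨f, hf, he⟩ := ((Finset.coe_nonempty.2 hF).image (fun f => f A)).csInf_mem
    (F.finite_toSet.image _)
  exact ⟨f, hf, he⟩

theorem infAt_nonneg (hδ : IsDiversity δ) (hP : ∀ f ∈ F, MemP δ f) (A : Finset X) :
    0 ≤ infAt F A :=
  Real.sInf_nonneg <| by
    rintro _ ⟨f, hf, rfl⟩
    exact (hP f hf).nonneg hδ A

theorem infAt_singleton (f : Finset X → ℝ) (A : Finset X) : infAt {f} A = f A := by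
  simp [infAt]

end infAt

section deltaT

variable {F : Finset (Finset X → ℝ)}

theorem deltaT_eq_sSup (hF : F.Nonempty) :
    deltaT δ F = sSup {r | ∃ 𝓐 : Finset (Finset X), r = δ (𝓐.sup id) - ∑ A ∈ 𝓐, infAt F A} := by
  rw [deltaT, if_neg hF.ne_empty]
  rfl

/-- The bound that makes `deltaT` finite: group the members of `𝓐` by a minimizer `f ∈ F` and
apply (D2) through `{x}`. -/
theorem delta_sup_le_sum_infAt_add (hδ : IsDiversity δ) (hF : F.Nonempty)
    (hP : ∀ f ∈ F, MemP δ f) (x : X) (𝓐 : Finset (Finset X)) :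
    δ (𝓐.sup id) ≤ ∑ A ∈ 𝓐, infAt F A + ∑ f ∈ F, f {x} := by
  choose m hmF hm using exists_eq_infAt hF
  set C : (Finset X → ℝ) → Finset X := fun f => (𝓐.filter (m · = f)).sup id
  have hsub : 𝓐.sup id ⊆ F.sup C ∪ {x} :=
    (Finset.sup_le fun A hA =>
      (Finset.le_sup (f := id) (s := 𝓐.filter (m · = m A)) (Finset.mem_filter.2 ⟨hA, rfl⟩)).trans
        (Finset.le_sup (f := C) (hmF A))).trans Finset.subset_union_left
  have hfiber : ∀ f ∈ F, δ (C f ∪ {x}) ≤ f {x} + ∑ A ∈ 𝓐.filter (m · = f), infAt F A := by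
    intro f hf
    rw [Finset.union_comm]
    refine ((hP f hf).delta_union_sup_le hδ {x} _).trans_eq ?_
    congr 1
    refine Finset.sum_congr rfl fun A hA => ?_
    rw [← (Finset.mem_filter.1 hA).2, hm]
  calc δ (𝓐.sup id) ≤ δ (F.sup C ∪ {x}) := hδ.mono hsub
    _ ≤ ∑ f ∈ F, δ (C f ∪ {x}) + δ {x} := hδ.apply_sup_union_le (by simp) F C
    _ ≤ ∑ f ∈ F, (f {x} + ∑ A ∈ 𝓐.filter (m · = f), infAt F A) := by
      rw [hδ.apply_singleton, add_zero]
      exact Finset.sum_le_sum hfiber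
    _ = ∑ A ∈ 𝓐, infAt F A + ∑ f ∈ F, f {x} := by
      rw [Finset.sum_add_distrib, Finset.sum_fiberwise_of_maps_to (fun A _ => hmF A), add_comm]

theorem delta_sup_le_sum_infAt_add_deltaT (hδ : IsDiversity δ) (hF : F.Nonempty)
    (hP : ∀ f ∈ F, MemP δ f) (𝓐 : Finset (Finset X)) :
    δ (𝓐.sup id) ≤ ∑ A ∈ 𝓐, infAt F A + deltaT δ F := by
  have hbdd : BddAbove {r | ∃ 𝓑 : Finset (Finset X), r = δ (𝓑.sup id) - ∑ A ∈ 𝓑, infAt F A} := by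
    cases isEmpty_or_nonempty X with
    | inl hX =>
      refine ⟨0, ?_⟩
      rintro _ ⟨𝓑, rfl⟩
      rw [Finset.eq_empty_of_isEmpty (𝓑.sup id), hδ.apply_empty]
      linarith [Finset.sum_nonneg fun A (_ : A ∈ 𝓑) => infAt_nonneg hδ hP A]
    | inr hX =>
      obtain ⟨x⟩ := hX
      refine ⟨∑ f ∈ F, f {x}, ?_⟩
      rintro _ ⟨𝓑, rfl⟩
      linarith [delta_sup_le_sum_infAt_add hδ hF hP x 𝓑]
  rw [deltaT_eq_sSup hF]
  linarith [le_csSup hbdd ⟨𝓐, rfl⟩]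

theorem deltaT_le (hδ : IsDiversity δ) {c : ℝ}
    (hc : ∀ 𝓐 : Finset (Finset X), δ (𝓐.sup id) ≤ ∑ A ∈ 𝓐, infAt F A + c) :
    deltaT δ F ≤ c := by
  rcases F.eq_empty_or_nonempty with rfl | hF
  · simpa [deltaT, hδ.apply_empty] using hc ∅
  · rw [deltaT_eq_sSup hF]
    refine csSup_le ⟨_, ∅, rfl⟩ ?_
    rintro _ ⟨𝓐, rfl⟩
    linarith [hc 𝓐]

theorem deltaT_nonneg (hδ : IsDiversity δ) (hP : ∀ f ∈ F, MemP δ f) : 0 ≤ deltaT δ F := by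
  rcases F.eq_empty_or_nonempty with rfl | hF
  · simp [deltaT]
  · simpa [hδ.apply_empty] using delta_sup_le_sum_infAt_add_deltaT hδ hF hP ∅

theorem deltaT_singleton (hδ : IsDiversity δ) {f : Finset X → ℝ} (hf : MemP δ f) :
    deltaT δ {f} = 0 :=
  le_antisymm (deltaT_le hδ fun 𝓐 => by simpa [infAt_singleton] using hf.2 𝓐)
    (deltaT_nonneg hδ (by simpa using hf))

theorem deltaT_pos (hδ : IsDiversity δ) (hT : ∀ f ∈ F, MemT δ f) (hF : 1 < F.card) :
    0 < deltaT δ F := by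
  obtain ⟨f, hf, g, hg, hfg⟩ := Finset.one_lt_card.1 hF
  obtain ⟨𝓐, h𝓐⟩ : ∃ 𝓐 : Finset (Finset X), ∑ A ∈ 𝓐, (f ⊓ g) A < δ (𝓐.sup id) := by
    by_contra! h
    exact (hT f hf).not_memP_inf (hT g hg) hfg ⟨by simp [(hT f hf).1.1, (hT g hg).1.1], h⟩
  have hinf : ∑ A ∈ 𝓐, infAt F A ≤ ∑ A ∈ 𝓐, (f ⊓ g) A :=
    Finset.sum_le_sum fun A _ => le_inf (infAt_le hf A) (infAt_le hg A)
  linarith [delta_sup_le_sum_infAt_add_deltaT hδ ⟨f, hf⟩ (fun f hf => (hT f hf).1) 𝓐]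

theorem deltaT_eq_zero_iff (hδ : IsDiversity δ) (hT : ∀ f ∈ F, MemT δ f) :
    deltaT δ F = 0 ↔ F.card ≤ 1 := by
  refine ⟨fun h => not_lt.1 fun hF => (deltaT_pos hδ hT hF).ne' h, fun hF => ?_⟩
  rcases F.eq_empty_or_nonempty with rfl | ⟨f, hf⟩
  · simp [deltaT]
  · rw [Finset.eq_singleton_iff_unique_mem.2 ⟨hf, fun g hg => Finset.card_le_one.1 hF g hg f hf⟩]
    exact deltaT_singleton hδ (hT f hf).1

end deltaT

theorem MemT.apply_sup_le_sum_infAt_add_deltaT (hδ : IsDiversity δ)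
    {E : Finset (Finset X → ℝ)} {g : Finset X → ℝ} (hg : MemT δ g) (hgE : g ∈ E)
    (hP : ∀ f ∈ E, MemP δ f) (𝓐 : Finset (Finset X)) :
    g (𝓐.sup id) ≤ ∑ A ∈ 𝓐, infAt E A + deltaT δ E := by
  refine hg.le_of_forall_delta_le hδ fun 𝓑 => ?_
  have hinter : 0 ≤ ∑ A ∈ 𝓐 ∩ 𝓑, infAt E A :=
    Finset.sum_nonneg fun A _ => infAt_nonneg hδ hP A
  have hunion := Finset.sum_union_inter (s₁ := 𝓐) (s₂ := 𝓑) (f := infAt E)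
  have hg𝓑 : ∑ B ∈ 𝓑, infAt E B ≤ ∑ B ∈ 𝓑, g B := Finset.sum_le_sum fun B _ => infAt_le hgE B
  calc δ (𝓐.sup id ∪ 𝓑.sup id) = δ ((𝓐 ∪ 𝓑).sup id) := by rw [Finset.sup_union]; rfl
    _ ≤ ∑ A ∈ 𝓐 ∪ 𝓑, infAt E A + deltaT δ E :=
      delta_sup_le_sum_infAt_add_deltaT hδ ⟨g, hgE⟩ hP _
    _ ≤ (∑ A ∈ 𝓐, infAt E A + deltaT δ E) + ∑ B ∈ 𝓑, g B := by linarith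

theorem exists_union_eq_sum_infAt_le {F G H : Finset (Finset X → ℝ)} (hFH : (F ∪ H).Nonempty)
    (𝓐 : Finset (Finset X)) :
    ∃ 𝓐₁ 𝓐₂ : Finset (Finset X), 𝓐₁ ∪ 𝓐₂ = 𝓐 ∧
      ∑ A ∈ 𝓐₁, infAt (F ∪ G) A + ∑ A ∈ 𝓐₂, infAt (G ∪ H) A ≤ ∑ A ∈ 𝓐, infAt (F ∪ H) A := by
  let p : Finset X → Prop := fun A => ∃ f ∈ F, f A = infAt (F ∪ H) A
  refine ⟨𝓐.filter p, 𝓐.filter (¬ p ·), Finset.filter_union_filter_not_eq _ _, ?_⟩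
  rw [← Finset.sum_filter_add_sum_filter_not 𝓐 p]
  refine add_le_add (Finset.sum_le_sum fun A hA => ?_) (Finset.sum_le_sum fun A hA => ?_)
  · obtain ⟨f, hf, hfA⟩ := (Finset.mem_filter.1 hA).2
    exact hfA ▸ infAt_le (Finset.mem_union_left G hf) A
  · obtain ⟨f, hf, hfA⟩ := exists_eq_infAt hFH A
    have hfH : f ∈ H := (Finset.mem_union.1 hf).resolve_left fun hfF =>
      (Finset.mem_filter.1 hA).2 ⟨f, hfF, hfA⟩
    exact hfA ▸ infAt_le (Finset.mem_union_right G hfH) A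

theorem deltaT_union_le (hδ : IsDiversity δ) {F G H : Finset (Finset X → ℝ)}
    {g : Finset X → ℝ} (hFG : ∀ f ∈ F ∪ G, MemP δ f) (hGH : ∀ f ∈ G ∪ H, MemP δ f)
    (hgG : g ∈ G) (hg : MemT δ g) :
    deltaT δ (F ∪ H) ≤ deltaT δ (F ∪ G) + deltaT δ (G ∪ H) := by
  rcases (F ∪ H).eq_empty_or_nonempty with hFH | hFH
  · rw [hFH, deltaT, if_pos rfl]
    exact add_nonneg (deltaT_nonneg hδ hFG) (deltaT_nonneg hδ hGH)
  refine deltaT_le hδ fun 𝓐 => ?_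
  obtain ⟨𝓐₁, 𝓐₂, rfl, hsplit⟩ := exists_union_eq_sum_infAt_le (G := G) hFH 𝓐
  calc δ ((𝓐₁ ∪ 𝓐₂).sup id) = δ (𝓐₁.sup id ∪ 𝓐₂.sup id) := by rw [Finset.sup_union]; rfl
    _ ≤ g (𝓐₁.sup id) + g (𝓐₂.sup id) := hg.1.delta_union_le hδ _ _
    _ ≤ (∑ A ∈ 𝓐₁, infAt (F ∪ G) A + deltaT δ (F ∪ G)) +
        (∑ A ∈ 𝓐₂, infAt (G ∪ H) A + deltaT δ (G ∪ H)) :=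
      add_le_add (hg.apply_sup_le_sum_infAt_add_deltaT hδ (Finset.mem_union_right F hgG) hFG 𝓐₁)
        (hg.apply_sup_le_sum_infAt_add_deltaT hδ (Finset.mem_union_left H hgG) hGH 𝓐₂)
    _ ≤ _ := by linarith

end

/-- `(T_X, δ_T)` is a diversity: `δ_T` is nonnegative on finite subsets of `T_X`,
vanishes exactly on subsets with at most one element, and satisfies the triangle
inequality (D2). -/
theorem tightSpan_is_diversity {X : Type*} (δ : Finset X → ℝ) (hδ : IsDiversity δ) :
    (∀ F : Finset (Finset X → ℝ), (∀ f ∈ F, MemT δ f) → 0 ≤ deltaT δ F) ∧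
    (∀ F : Finset (Finset X → ℝ), (∀ f ∈ F, MemT δ f) → (deltaT δ F = 0 ↔ F.card ≤ 1)) ∧
    (∀ F G H : Finset (Finset X → ℝ), (∀ f ∈ F ∪ G ∪ H, MemT δ f) → G ≠ ∅ →
      deltaT δ (F ∪ H) ≤ deltaT δ (F ∪ G) + deltaT δ (G ∪ H)) := by
  refine ⟨fun F hT => deltaT_nonneg hδ fun f hf => (hT f hf).1,
    fun F hT => deltaT_eq_zero_iff hδ hT, fun F G H hT hG => ?_⟩
  obtain ⟨g, hgG⟩ := Finset.nonempty_iff_ne_empty.2 hG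
  have hP : ∀ {E}, E ⊆ F ∪ G ∪ H → ∀ f ∈ E, MemP δ f := fun hE f hf => (hT f (hE hf)).1
  exact deltaT_union_le hδ (hP (by grind)) (hP (by grind)) hgG (hT g (by simp [hgG]))

end
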